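/- arXiv:2603.20683 — 10 statements merged into one kernel-verified Lean document; each statement's English description precedes it below -/
import Mathlib

section
/- Let F be continuous and strictly increasing on [0,K] with F(0)=0, F(K)=1, and derivative f > 0 on (0,K). Let λ₁ ≤ λ₂ be two thresholds in (0,K) with p_i = 1 − F(λ_i), and let G_i(x) = (F(x) − F(λ_i))/(1 − F(λ_i)) for x ≥ λ_i. Suppose (i) the low-threshold player's zero-profit condition holds: W·∫_{λ₂}^K G₂(x)·f(x) dx = c, and (ii) the high-threshold player's Bellman equation with indifference value V₂ = W·G₁(λ₂) holds: W·G₁(λ₂)·(1 − F(λ₂)) = −c + W·∫_{λ₂}^K G₁(x)·f(x) dx. Then p₁ = p₂ and λ₁ = λ₂: with two players there are no asymmetric equilibria. -/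
open intervalIntegral

/-! Both integrals are explicit, since `(F - a)² / 2` is an antiderivative of `(F - a) f`.
Writing `A = F λ₁`, `B = F λ₂`, the zero-profit condition becomes `W (1 - B) = 2c`, and the Bellman
equation times `2 (1 - A)` becomes `2 W (B - A)(1 - B) = -2c (1 - A) + W (1 - B)(1 - 2A + B)`.
Eliminating `c` leaves `W (1 - B)(B - A) = 0`, so `A = B`, and strict monotonicity of `F` gives
`λ₁ = λ₂`. -/

theorem integral_sub_mul_deriv_of_nonneg {F f : ℝ → ℝ} {a b : ℝ} (hab : a ≤ b)
    (hF : ContinuousOn F (Set.Icc a b)) (hF' : ∀ x ∈ Set.Ioo a b, HasDerivAt F (f x) x)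
    (hf : ∀ x ∈ Set.Ioo a b, 0 ≤ f x) (c : ℝ) :
    ∫ x in a..b, (F x - c) * f x = ((F b - c) ^ 2 - (F a - c) ^ 2) / 2 := by
  rw [← Set.uIcc_of_le hab] at hF
  have hf_int : IntervalIntegrable f MeasureTheory.volume a b :=
    intervalIntegrable_deriv_of_nonneg hF (by simpa [hab] using hF') (by simpa [hab] using hf)
  rw [integral_eq_sub_of_hasDeriv_right_of_le hab (f := fun x => (F x - c) ^ 2 / 2)]
  · ring
  · rw [← Set.uIcc_of_le hab]
    exact ((hF.sub continuousOn_const).pow 2).div_const 2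
  · intro x hx
    exact ((((hF' x hx).sub_const c).pow 2).div_const 2).hasDerivWithinAt.congr_deriv (by ring)
  · exact hf_int.continuousOn_mul (hF.sub continuousOn_const)

theorem integral_sub_div_mul_deriv_of_nonneg {F f : ℝ → ℝ} {a b : ℝ} (hab : a ≤ b)
    (hF : ContinuousOn F (Set.Icc a b)) (hF' : ∀ x ∈ Set.Ioo a b, HasDerivAt F (f x) x)
    (hf : ∀ x ∈ Set.Ioo a b, 0 ≤ f x) (c d : ℝ) :
    ∫ x in a..b, (F x - c) / d * f x = ((F b - c) ^ 2 - (F a - c) ^ 2) / (2 * d) := by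
  simp_rw [div_mul_eq_mul_div, integral_div, integral_sub_mul_deriv_of_nonneg hab hF hF' hf c]
  ring

theorem eq_of_zero_profit_of_bellman {A B c W : ℝ} (hW : 0 < W) (hA : A < 1) (hB : B < 1)
    (hzp : W * ((1 - B) ^ 2 / (2 * (1 - B))) = c)
    (hbellman : W * ((B - A) / (1 - A)) * (1 - B)
      = -c + W * (((1 - A) ^ 2 - (B - A) ^ 2) / (2 * (1 - A)))) :
    A = B := by
  have hA' : 1 - A ≠ 0 := (sub_pos.2 hA).ne'
  have hB' : 1 - B ≠ 0 := (sub_pos.2 hB).ne'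
  have zero_profit : W * (1 - B) = 2 * c := by
    rw [← hzp]; field_simp
  have bellman :
      2 * W * (B - A) * (1 - B) = -2 * c * (1 - A) + W * ((1 - A) ^ 2 - (B - A) ^ 2) := by
    field_simp at hbellman; linear_combination hbellman
  have key : W * (1 - B) * (B - A) = 0 := by
    linear_combination bellman + (1 - A) * zero_profit
  linarith [(mul_eq_zero.1 key).resolve_left (mul_ne_zero hW.ne' hB')]

theorem stmt_3_general
    (K : ℝ)
    (F f : ℝ → ℝ)
    (hFcont : ContinuousOn F (Set.Icc 0 K))
    (hFmono : StrictMonoOn F (Set.Icc 0 K))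
    (hFK : F K = 1)
    (hderiv : ∀ x ∈ Set.Ioo 0 K, HasDerivAt F (f x) x)
    (hfpos : ∀ x ∈ Set.Ioo 0 K, 0 < f x)
    (c W : ℝ) (hW : 0 < W)
    (lam₁ lam₂ : ℝ) (h₁ : lam₁ ∈ Set.Ioo 0 K) (h₂ : lam₂ ∈ Set.Ioo 0 K)
    -- (i) low-threshold player's zero-profit condition
    (hzp : W * ∫ x in lam₂..K, ((F x - F lam₂) / (1 - F lam₂)) * f x = c)
    -- (ii) high-threshold player's Bellman equation with V₂ = W·G₁(λ₂)
    (hbellman :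
      W * ((F lam₂ - F lam₁) / (1 - F lam₁)) * (1 - F lam₂)
        = -c + W * ∫ x in lam₂..K, ((F x - F lam₁) / (1 - F lam₁)) * f x) :
    (1 - F lam₁) = (1 - F lam₂) ∧ lam₁ = lam₂ := by
  have mem_Icc {x : ℝ} (hx : x ∈ Set.Ioo 0 K) : x ∈ Set.Icc 0 K := Set.Ioo_subset_Icc_self hx
  have lt_one {x : ℝ} (hx : x ∈ Set.Ioo 0 K) : F x < 1 :=
    hFK ▸ hFmono (mem_Icc hx) ⟨hx.1.le.trans hx.2.le, le_rfl⟩ hx.2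
  have integral_eq (a d : ℝ) : ∫ x in lam₂..K, (F x - a) / d * f x
      = ((F K - a) ^ 2 - (F lam₂ - a) ^ 2) / (2 * d) :=
    integral_sub_div_mul_deriv_of_nonneg h₂.2.le
      (hFcont.mono (Set.Icc_subset_Icc h₂.1.le le_rfl))
      (fun x hx => hderiv x (Set.Ioo_subset_Ioo h₂.1.le le_rfl hx))
      (fun x hx => (hfpos x (Set.Ioo_subset_Ioo h₂.1.le le_rfl hx)).le) a d
  rw [integral_eq, hFK] at hzp hbellman
  rw [sub_self, zero_pow two_ne_zero, sub_zero] at hzp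
  have hF : F lam₁ = F lam₂ := eq_of_zero_profit_of_bellman hW (lt_one h₁) (lt_one h₂) hzp hbellman
  exact ⟨by rw [hF], hFmono.injOn (mem_Icc h₁) (mem_Icc h₂) hF⟩

/-- With two players there are no asymmetric equilibria: if thresholds
`λ₁ ≤ λ₂` satisfy the low-threshold player's zero-profit condition and the
high-threshold player's Bellman indifference condition, then `λ₁ = λ₂`. -/
theorem stmt_3
    (K : ℝ) (hK : 0 < K)
    (F f : ℝ → ℝ)
    (hFcont : ContinuousOn F (Set.Icc 0 K))
    (hFmono : StrictMonoOn F (Set.Icc 0 K))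
    (hF0 : F 0 = 0) (hFK : F K = 1)
    (hderiv : ∀ x ∈ Set.Ioo 0 K, HasDerivAt F (f x) x)
    (hfpos : ∀ x ∈ Set.Ioo 0 K, 0 < f x)
    (c W : ℝ) (hc : 0 < c) (hW : 0 < W)
    (lam₁ lam₂ : ℝ) (h₁ : lam₁ ∈ Set.Ioo 0 K) (h₂ : lam₂ ∈ Set.Ioo 0 K)
    (hle : lam₁ ≤ lam₂)
    -- (i) low-threshold player's zero-profit condition
    (hzp : W * ∫ x in lam₂..K, ((F x - F lam₂) / (1 - F lam₂)) * f x = c)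
    -- (ii) high-threshold player's Bellman equation with V₂ = W·G₁(λ₂)
    (hbellman :
      W * ((F lam₂ - F lam₁) / (1 - F lam₁)) * (1 - F lam₂)
        = -c + W * ∫ x in lam₂..K, ((F x - F lam₁) / (1 - F lam₁)) * f x) :
    (1 - F lam₁) = (1 - F lam₂) ∧ lam₁ = lam₂ :=
  stmt_3_general K F f hFcont hFmono hFK hderiv hfpos c W hW lam₁ lam₂ h₁ h₂ hzp hbellman
end

section
/- Let F be continuous and strictly increasing on [0,K] with F(0)=0, F(K)=1, and derivative f > 0 on (0,K). Let N ≥ 2, let W₁ ≥ W₂ ≥ ⋯ ≥ W_N ≥ 0 with average prize W̄ = (1/N)∑_k W_k satisfying W̄ > W_N, and let 0 < c < W̄ − W_N. Then λ := F⁻¹(1 − c/(W̄ − W_N)) is the unique λ ∈ (0,K) satisfying the symmetric-equilibrium indifference condition W_N · (1 − F(λ)) = −c + ∫_λ^K Π_λ(x) · f(x) dx, where Π_λ(x) = ∑_{k=1}^N W_k · C(N−1,k−1) · G_λ(x)^(N−k) · (1 − G_λ(x))^(k−1) and G_λ(x) = (F(x) − F(λ))/(1 − F(λ)). In particular, the equilibrium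 acceptance probability is 1 − F(λ) = c/(W̄ − W_N), independent of F. -/
/-!
Substituting `u = G_λ(x) = (F x - F λ)/(1 - F λ)` turns the equilibrium integral into
`(1 - F λ) ∫₀¹ Π(u) du`. In the variable `u`, `Π` is a combination of the Bernstein polynomials
of degree `N - 1`, each of which integrates to `1/N` over `[0, 1]`, so the integral equals
`(1 - F λ) W̄`. The indifference condition thus becomes linear in `1 - F λ`, namely
`(1 - F λ)(W̄ - W_N) = c`, and strict monotonicity and continuity of `F` give exactly one
solution.
-/

open intervalIntegral Finset Polynomial

namespace bernsteinPolynomial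

theorem derivative_sum_Ico (n ν : ℕ) (h : ν ≤ n) :
    derivative (∑ j ∈ Ico ν (n + 1), bernsteinPolynomial ℝ (n + 1) (j + 1)) =
      (n + 1) * bernsteinPolynomial ℝ n ν := by
  have htel : ∑ j ∈ Ico ν (n + 1), (bernsteinPolynomial ℝ n j - bernsteinPolynomial ℝ n (j + 1))
      = bernsteinPolynomial ℝ n ν := by
    rw [← neg_neg (∑ j ∈ _, _), ← sum_neg_distrib]
    simp only [neg_sub]
    rw [sum_Ico_sub _ (Nat.le_succ_of_le h), eq_zero_of_lt ℝ n.lt_succ_self, zero_sub, neg_neg]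
  simp only [derivative_sum, derivative_succ_aux, ← mul_sum, htel]

theorem integral_eval (n ν : ℕ) (h : ν ≤ n) :
    ∫ u in (0 : ℝ)..1, (bernsteinPolynomial ℝ n ν).eval u = 1 / (n + 1) := by
  set A := ∑ j ∈ Ico ν (n + 1), bernsteinPolynomial ℝ (n + 1) (j + 1)
  have hA (u : ℝ) : HasDerivAt (fun u => A.eval u / (n + 1))
      ((bernsteinPolynomial ℝ n ν).eval u) u := by
    have := (A.hasDerivAt u).div_const (n + 1 : ℝ)
    rwa [derivative_sum_Ico n ν h, eval_mul, mul_div_right_comm, eval_add, eval_one,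
      eval_natCast, div_self (by positivity), one_mul] at this
  rw [integral_eq_sub_of_hasDerivAt (fun u _ => hA u)
    ((Polynomial.continuous _).intervalIntegrable _ _)]
  have hA0 : A.eval 0 = 0 := by simp [A, eval_finsetSum, eval_at_0]
  have hA1 : A.eval 1 = 1 := by
    simp [A, eval_finsetSum, eval_at_1, h]
  rw [hA0, hA1]; ring

end bernsteinPolynomial

/-- The paper's `Π_λ(x)` as a function of `u = G_λ(x)`; `W k` is the prize for rank `k + 1`. -/
def expectedPrize (N : ℕ) (W : ℕ → ℝ) (u : ℝ) : ℝ :=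
  ∑ k ∈ range N, W k * (N - 1).choose k * u ^ (N - 1 - k) * (1 - u) ^ k

theorem expectedPrize_eq_sum_bernstein (N : ℕ) (W : ℕ → ℝ) (u : ℝ) :
    expectedPrize N W u =
      ∑ k ∈ range N, W k * (bernsteinPolynomial ℝ (N - 1) (N - 1 - k)).eval u := by
  refine sum_congr rfl fun k hk => ?_
  have hk : k ≤ N - 1 := by have := mem_range.mp hk; omega
  simp [bernsteinPolynomial, Nat.choose_symm hk, Nat.sub_sub_self hk, mul_assoc]

theorem integral_expectedPrize (N : ℕ) (W : ℕ → ℝ) :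
    ∫ u in (0 : ℝ)..1, expectedPrize N W u = (∑ k ∈ range N, W k) / N := by
  simp_rw [expectedPrize_eq_sum_bernstein]
  rw [integral_finsetSum fun k _ =>
    ((Polynomial.continuous _).const_mul _).intervalIntegrable _ _, sum_div]
  refine sum_congr rfl fun k hk => ?_
  have hN : 1 ≤ N := by have := mem_range.mp hk; omega
  rw [integral_const_mul, bernsteinPolynomial.integral_eval _ _ (Nat.sub_le _ _),
    Nat.cast_sub hN, Nat.cast_one, sub_add_cancel, mul_one_div]

theorem integral_comp_normalize_mul_deriv {F f : ℝ → ℝ} {a b : ℝ} (hab : a ≤ b)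
    (hFab : F a < F b) (hF : ContinuousOn F (Set.Icc a b))
    (hderiv : ∀ x ∈ Set.Ioo a b, HasDerivAt F (f x) x) (hf : ∀ x ∈ Set.Ioo a b, 0 ≤ f x)
    (g : ℝ → ℝ) :
    ∫ x in a..b, g ((F x - F a) / (F b - F a)) * f x = (F b - F a) * ∫ u in (0 : ℝ)..1, g u := by
  have hs : 0 < F b - F a := sub_pos.mpr hFab
  set G := fun x => (F x - F a) / (F b - F a)
  have hcov := integral_comp_mul_deriv_of_deriv_nonneg (g := g) (f := G)
    (f' := fun x => f x / (F b - F a))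
    (by rw [Set.uIcc_of_le hab]; exact (hF.sub continuousOn_const).div_const _)
    (by
      rw [min_eq_left hab, max_eq_right hab]
      exact fun x hx => ((hderiv x hx).sub_const _).div_const _)
    (by
      rw [min_eq_left hab, max_eq_right hab]
      exact fun x hx => div_nonneg (hf x hx) hs.le)
  simp only [G, sub_self, zero_div, div_self hs.ne', Function.comp_def] at hcov
  rw [← hcov, ← integral_const_mul]
  congr 1 with x
  field_simp

theorem stmt_5_general
    (K : ℝ) (hK : 0 < K)
    (F f : ℝ → ℝ)
    (hFcont : ContinuousOn F (Set.Icc 0 K))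
    (hFmono : StrictMonoOn F (Set.Icc 0 K))
    (hF0 : F 0 = 0) (hFK : F K = 1)
    (hderiv : ∀ x ∈ Set.Ioo 0 K, HasDerivAt F (f x) x)
    (hfpos : ∀ x ∈ Set.Ioo 0 K, 0 < f x)
    (N : ℕ)
    (W : ℕ → ℝ)
    (Wbar : ℝ) (hWbar : Wbar = (∑ k ∈ Finset.range N, W k) / N)
    (c : ℝ) (hc : 0 < c) (hcgap : c < Wbar - W (N - 1)) :
    ∃ lam ∈ Set.Ioo (0:ℝ) K,
      1 - F lam = c / (Wbar - W (N - 1)) ∧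
      (W (N - 1) * (1 - F lam)
        = -c + ∫ x in lam..K,
            (∑ k ∈ Finset.range N,
              W k * (Nat.choose (N - 1) k : ℝ)
                * ((F x - F lam) / (1 - F lam)) ^ (N - 1 - k)
                * (1 - (F x - F lam) / (1 - F lam)) ^ k) * f x) ∧
      ∀ lam' ∈ Set.Ioo (0:ℝ) K,
        (W (N - 1) * (1 - F lam')
          = -c + ∫ x in lam'..K,
              (∑ k ∈ Finset.range N,
                W k * (Nat.choose (N - 1) k : ℝ)
                  * ((F x - F lam') / (1 - F lam')) ^ (N - 1 - k)
                  * (1 - (F x - F lam') / (1 - F lam')) ^ k) * f x)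
        → lam' = lam := by
  have hgap_pos : 0 < Wbar - W (N - 1) := hc.trans hcgap
  have hindiff : ∀ μ ∈ Set.Ioo 0 K, (W (N - 1) * (1 - F μ) = -c + ∫ x in μ..K,
      expectedPrize N W ((F x - F μ) / (1 - F μ)) * f x) ↔ 1 - F μ = c / (Wbar - W (N - 1)) := by
    intro μ hμ
    have hμK := hFmono ⟨hμ.1.le, hμ.2.le⟩ ⟨hK.le, le_rfl⟩ hμ.2
    have hint := integral_comp_normalize_mul_deriv hμ.2.le hμK
      (hFcont.mono (Set.Icc_subset_Icc_left hμ.1.le))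
      (fun x hx => hderiv x ⟨hμ.1.trans hx.1, hx.2⟩)
      (fun x hx => (hfpos x ⟨hμ.1.trans hx.1, hx.2⟩).le) (expectedPrize N W)
    rw [hFK] at hint
    rw [hint, integral_expectedPrize, ← hWbar, eq_div_iff hgap_pos.ne']
    constructor <;> intro h <;> linear_combination -h
  have hlevel : 1 - c / (Wbar - W (N - 1)) ∈ Set.Ioo (F 0) (F K) := by
    rw [hF0, hFK, Set.mem_Ioo, sub_pos, sub_lt_self_iff, div_lt_one hgap_pos]
    exact ⟨hcgap, div_pos hc hgap_pos⟩
  obtain ⟨lam, hlam, hFlam⟩ := intermediate_value_Ioo hK.le hFcont hlevel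
  have hlam_eq : 1 - F lam = c / (Wbar - W (N - 1)) := by rw [hFlam, sub_sub_cancel]
  refine ⟨lam, hlam, hlam_eq, (hindiff lam hlam).mpr hlam_eq, fun lam' hlam' h => ?_⟩
  refine hFmono.injOn (Set.Ioo_subset_Icc_self hlam') (Set.Ioo_subset_Icc_self hlam) ?_
  linarith [(hindiff lam' hlam').mp h]

/-- Symmetric equilibrium with rank-order prizes `W 0 ≥ ⋯ ≥ W (N-1) ≥ 0`
(`W k` is the prize for rank `k+1`): there is a unique threshold `λ ∈ (0,K)`
satisfying the indifference condition
`W_N·(1 − F λ) = −c + ∫_λ^K Π_λ(x)·f x dx`, and it satisfies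
`1 − F λ = c/(W̄ − W_N)`, independent of `F`. -/
theorem stmt_5
    (K : ℝ) (hK : 0 < K)
    (F f : ℝ → ℝ)
    (hFcont : ContinuousOn F (Set.Icc 0 K))
    (hFmono : StrictMonoOn F (Set.Icc 0 K))
    (hF0 : F 0 = 0) (hFK : F K = 1)
    (hderiv : ∀ x ∈ Set.Ioo 0 K, HasDerivAt F (f x) x)
    (hfpos : ∀ x ∈ Set.Ioo 0 K, 0 < f x)
    (N : ℕ) (hN : 2 ≤ N)
    (W : ℕ → ℝ)
    (hWmono : ∀ k, k + 1 < N → W (k + 1) ≤ W k)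
    (hWlast : 0 ≤ W (N - 1))
    (Wbar : ℝ) (hWbar : Wbar = (∑ k ∈ Finset.range N, W k) / N)
    (hgap : W (N - 1) < Wbar)
    (c : ℝ) (hc : 0 < c) (hcgap : c < Wbar - W (N - 1)) :
    ∃ lam ∈ Set.Ioo (0:ℝ) K,
      1 - F lam = c / (Wbar - W (N - 1)) ∧
      (W (N - 1) * (1 - F lam)
        = -c + ∫ x in lam..K,
            (∑ k ∈ Finset.range N,
              W k * (Nat.choose (N - 1) k : ℝ)
                * ((F x - F lam) / (1 - F lam)) ^ (N - 1 - k)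
                * (1 - (F x - F lam) / (1 - F lam)) ^ k) * f x) ∧
      ∀ lam' ∈ Set.Ioo (0:ℝ) K,
        (W (N - 1) * (1 - F lam')
          = -c + ∫ x in lam'..K,
              (∑ k ∈ Finset.range N,
                W k * (Nat.choose (N - 1) k : ℝ)
                  * ((F x - F lam') / (1 - F lam')) ^ (N - 1 - k)
                  * (1 - (F x - F lam') / (1 - F lam')) ^ k) * f x)
        → lam' = lam :=
  stmt_5_general K hK F f hFcont hFmono hF0 hFK hderiv hfpos N W Wbar hWbar c hc hcgap
end

section
/- Let a ∈ (0,1) and let N ≥ 2 be an integer. Define h_a : [0,1] → ℝ by h_a(u) = a·u for u < a and h_a(u) = (1+a)·u − a for u ≥ a. Then ∫_0^1 h_a(u)^(N−1) du = (1 + a^(2N−1)) / (N·(1+a)). In particular, the two-draw contest's equilibrium condition is distribution-free: its round-1 indifference condition reduces to c/W = (1 + a^(2N−1))/(N·(1+a)) − a^(2N−2) for the acceptance quantile a = F(λ). -/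
/-!
On `[0, a]` the integrand is `(a u)^(N-1)` and on `[a, 1]` it is `((1+a) u - a)^(N-1)`; both are
powers of affine maps, so the two pieces integrate to `a^(2N-1)/N` and
`(1 - a^(2N))/(N (1+a))`, whose sum is `(1 + a^(2N-1))/(N (1+a))`. The indifference condition is
then a linear rearrangement, using `2 (N-1) = 2N - 2` for `N ≥ 1`.
-/

open intervalIntegral

namespace intervalIntegral

variable {E : Type*} [NormedAddCommGroup E] [NormedSpace ℝ E]

theorem integral_ite_lt_eq_add {f g : ℝ → E} {x y z : ℝ} (hxy : x ≤ y) (hyz : y ≤ z)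
    (hf : IntervalIntegrable f MeasureTheory.volume x y)
    (hg : IntervalIntegrable g MeasureTheory.volume y z) :
    ∫ u in x..z, (if u < y then f u else g u) = (∫ u in x..y, f u) + ∫ u in y..z, g u := by
  have left : Set.EqOn f (fun u => if u < y then f u else g u) (Set.uIoo x y) := by
    intro u hu
    rw [Set.uIoo_of_le hxy] at hu
    simp [hu.2]
  have right : Set.EqOn g (fun u => if u < y then f u else g u) (Set.uIoo y z) := by
    intro u hu
    rw [Set.uIoo_of_le hyz] at hu
    simp [not_lt.mpr hu.1.le]
  rw [← integral_add_adjacent_intervals (hf.congr_uIoo left) (hg.congr_uIoo right),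
    integral_congr_uIoo left.symm, integral_congr_uIoo right.symm]

theorem integral_mul_sub_pow {c : ℝ} (hc : c ≠ 0) (d x z : ℝ) (n : ℕ) :
    ∫ u in x..z, (c * u - d) ^ n
      = ((c * z - d) ^ (n + 1) - (c * x - d) ^ (n + 1)) / (c * (n + 1)) := by
  rw [integral_comp_mul_sub (fun u => u ^ n) hc, integral_pow, smul_eq_mul]
  field_simp

end intervalIntegral

noncomputable def twoDrawCDF (a u : ℝ) : ℝ := if u < a then a * u else (1 + a) * u - a

theorem integral_twoDrawCDF_pow {a : ℝ} (ha₀ : 0 ≤ a) (ha₁ : a ≤ 1) (n : ℕ) :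
    ∫ u in (0:ℝ)..1, twoDrawCDF a u ^ n = (1 + a ^ (2 * n + 1)) / ((n + 1) * (1 + a)) := by
  simp only [twoDrawCDF, apply_ite (· ^ n)]
  rw [integral_ite_lt_eq_add ha₀ ha₁ ((by fun_prop : Continuous _).intervalIntegrable _ _)
    ((by fun_prop : Continuous _).intervalIntegrable _ _), integral_mul_sub_pow (by positivity)]
  simp only [mul_pow, integral_const_mul, integral_pow]
  field_simp
  ring

/-- In the two-draw contest with round-1 acceptance quantile `a`, an opponent's
final-score quantile CDF is `h_a(u) = a·u` for `u < a` and `(1+a)·u − a` for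
`u ≥ a`, and `∫_0^1 h_a(u)^(N−1) du = (1 + a^(2N−1))/(N·(1+a))`. In particular,
the round-1 indifference condition is distribution-free: it reduces to
`c/W = (1 + a^(2N−1))/(N·(1+a)) − a^(2N−2)`. -/
theorem stmt_6
    (a : ℝ) (ha : a ∈ Set.Ioo (0:ℝ) 1)
    (N : ℕ) (hN : 2 ≤ N)
    (h : ℝ → ℝ)
    (hdef : ∀ u : ℝ, h u = if u < a then a * u else (1 + a) * u - a) :
    (∫ u in (0:ℝ)..1, (h u) ^ (N - 1))
      = (1 + a ^ (2 * N - 1)) / (N * (1 + a)) ∧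
    ∀ c W : ℝ, 0 < W →
      ((W * a ^ (2 * (N - 1)) + c = W * ∫ u in (0:ℝ)..1, (h u) ^ (N - 1))
        ↔ c / W = (1 + a ^ (2 * N - 1)) / (N * (1 + a)) - a ^ (2 * N - 2)) := by
  obtain ⟨n, rfl⟩ : ∃ n, N = n + 1 := ⟨N - 1, by omega⟩
  have hh : h = twoDrawCDF a := funext hdef
  have hint : ∫ u in (0:ℝ)..1, h u ^ (n + 1 - 1)
      = (1 + a ^ (2 * (n + 1) - 1)) / (((n + 1 : ℕ) : ℝ) * (1 + a)) := by
    rw [hh, Nat.add_sub_cancel, show 2 * (n + 1) - 1 = 2 * n + 1 by omega,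
      integral_twoDrawCDF_pow ha.1.le ha.2.le]
    push_cast
    ring
  refine ⟨hint, fun c W hW => ?_⟩
  rw [hint, show 2 * (n + 1) - 2 = 2 * (n + 1 - 1) by omega, div_eq_iff hW.ne']
  constructor <;> intro heq <;> linear_combination heq
end

section
/- For every integer N ≥ 2 there exists a ∈ (0,1) such that 1 + a^(2N−1) = N·(1+a)·a^(2N−2). (Existence of the symmetric equilibrium quantile of the two-draw contest with zero search cost.) -/
/-- Existence of the symmetric equilibrium quantile of the two-draw contest
with zero search cost: for every `N ≥ 2` there is `a ∈ (0,1)` with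
`1 + a^(2N−1) = N·(1+a)·a^(2N−2)`. -/
theorem stmt_7 (N : ℕ) (hN : 2 ≤ N) :
    ∃ a ∈ Set.Ioo (0:ℝ) 1,
      1 + a ^ (2 * N - 1) = (N : ℝ) * (1 + a) * a ^ (2 * N - 2) := by
  set f : ℝ → ℝ := fun a => (N : ℝ) * (1 + a) * a ^ (2 * N - 2) - (1 + a ^ (2 * N - 1))
  have hcont : Continuous f := by fun_prop
  have h1 : 1 ≤ 2 * N - 2 := by omega
  have h2 : 1 ≤ 2 * N - 1 := by omega
  have hf0 : f 0 = -1 := by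
    simp [f, zero_pow (by omega : 2 * N - 2 ≠ 0), zero_pow (by omega : 2 * N - 1 ≠ 0)]
  have hf1 : f 1 = 2 * N - 2 := by
    simp [f]; ring
  have h0lt : f 0 < 0 := by rw [hf0]; norm_num
  have h1gt : 0 < f 1 := by
    rw [hf1]
    have : (2:ℝ) ≤ N := by exact_mod_cast hN
    linarith
  have := intermediate_value_Ioo (by norm_num : (0:ℝ) ≤ 1) hcont.continuousOn
    (Set.mem_Ioo.mpr ⟨h0lt, h1gt⟩)
  obtain ⟨a, ha, hfa⟩ := this
  exact ⟨a, ha, by simp only [f] at hfa; linarith⟩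
end

section
/- Let N ≥ 2 be an integer and suppose a ∈ (0,1) satisfies 1 + a^(2N−1) = N·(1+a)·a^(2N−2). Then there exists b ∈ (a, 1) satisfying 1 + b^(2N+1) = (N+1)·(1+b)·b^(2N). (In the two-draw contest with zero search cost, the equilibrium threshold quantile is strictly increasing in the number of players: the selectivity effect.) -/
/-- The selectivity effect: in the two-draw contest with zero search cost, the
equilibrium quantile strictly increases with the number of players. If
`a ∈ (0,1)` is the `N`-player equilibrium quantile, then there is an
`(N+1)`-player equilibrium quantile `b ∈ (a,1)`. -/
theorem stmt_9 (N : ℕ) (hN : 2 ≤ N)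
    (a : ℝ) (ha : a ∈ Set.Ioo (0:ℝ) 1)
    (heq : 1 + a ^ (2 * N - 1) = (N : ℝ) * (1 + a) * a ^ (2 * N - 2)) :
    ∃ b ∈ Set.Ioo a 1,
      1 + b ^ (2 * N + 1) = ((N : ℝ) + 1) * (1 + b) * b ^ (2 * N) := by
  obtain ⟨ha0, ha1⟩ := ha
  obtain ⟨m, rfl⟩ : ∃ m, N = m + 2 := ⟨N - 2, by omega⟩
  have e1 : 2 * (m + 2) - 1 = 2 * m + 3 := by omega
  have e2 : 2 * (m + 2) - 2 = 2 * m + 2 := by omega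
  rw [e1, e2] at heq
  push_cast at heq
  have hm0 : (0:ℝ) ≤ (m:ℝ) := Nat.cast_nonneg m
  -- key identity: a^(2m+2) * ((m+2) + (m+1)a) = 1
  have hkey : a ^ (2*m+2) * (((m:ℝ)+2) + ((m:ℝ)+1) * a) = 1 := by
    have hs : a ^ (2*m+3) = a ^ (2*m+2) * a := by ring
    linear_combination -heq + hs
  have hpow_pos : (0:ℝ) < a ^ (2*m+2) := pow_pos ha0 _
  -- upper bound on a : (2m+4)(1-a) ≥ 1
  have hub : 1 ≤ (2*(m:ℝ)+4) * (1 - a) := by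
    by_contra h
    push_neg at h
    have hbern : 1 + ((2*m+2 : ℕ) : ℝ) * (-(1-a)) ≤ (1 + (-(1-a))) ^ (2*m+2) :=
      one_add_mul_le_pow (by linarith) _
    have hb2 : 1 - (2*(m:ℝ)+2) * (1-a) ≤ a ^ (2*m+2) := by
      have h1 : (1 + (-(1-a))) = a := by ring
      rw [h1] at hbern
      push_cast at hbern
      linarith
    -- then (m+2)*a^(2m+2) > 1, so hkey LHS > 1
    have h2 : 1 < ((m:ℝ)+2) * a ^ (2*m+2) := by
      nlinarith [hb2, h, hm0]
    nlinarith [hkey, h2, mul_pos hpow_pos ha0, hm0]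
  -- (m+2)a^2 + a < m+2
  have hNa : ((m:ℝ)+2) * a^2 + a < (m:ℝ)+2 := by
    nlinarith [mul_le_mul_of_nonneg_right hub (le_of_lt (show (0:ℝ) < 1 + a by linarith)), ha1]
  -- a + a^(2m+4) < 1
  have hD : (0:ℝ) < ((m:ℝ)+2) + ((m:ℝ)+1) * a := by positivity
  have hsplit : a ^ (2*m+4) = a ^ (2*m+2) * a^2 := by ring
  have habound : a + a ^ (2*m+4) < 1 := by
    have hx : (a + a ^ (2*m+4)) * (((m:ℝ)+2) + ((m:ℝ)+1) * a)
        < 1 * (((m:ℝ)+2) + ((m:ℝ)+1) * a) := by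
      nlinarith [hkey, hNa, hsplit]
    exact lt_of_mul_lt_mul_right hx (le_of_lt hD)
  -- intermediate value theorem
  set g : ℝ → ℝ := fun x => ((m:ℝ)+3) * (1+x) * x ^ (2*m+4) - (1 + x ^ (2*m+5)) with hg
  have hga : g a < 0 := by
    have hid : g a = -((1+a) * (1 - a - a ^ (2*m+4))) := by
      simp only [hg]
      linear_combination (-(a^2)) * heq
    rw [hid]
    have : (0:ℝ) < (1+a) * (1 - a - a ^ (2*m+4)) :=
      mul_pos (by linarith) (by linarith)
    linarith
  have hg1 : 0 < g 1 := by
    simp only [hg, one_pow, mul_one]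
    nlinarith [hm0]
  have hcont : ContinuousOn g (Set.Icc a 1) := by
    apply Continuous.continuousOn
    fun_prop
  have hsub := intermediate_value_Ioo (le_of_lt ha1) hcont
  have h0 : (0:ℝ) ∈ Set.Ioo (g a) (g 1) := ⟨hga, hg1⟩
  obtain ⟨b, hb, hgb⟩ := hsub h0
  refine ⟨b, hb, ?_⟩
  have e3 : 2 * (m + 2) + 1 = 2*m + 5 := by omega
  have e4 : 2 * (m + 2) = 2*m + 4 := by omega
  rw [e3, e4]
  push_cast
  simp only [hg] at hgb
  linarith [hgb]
end

section
/- Let F be continuous and strictly increasing on [0,K] with F(0)=0, F(K)=1, and continuous derivative f > 0 on (0,K). Fix integers N ≥ 1, M ≥ 2 and b ∈ (0,K). For β ∈ (0,K) define P(β) = ∫_{max(b,β)}^K ((F(x) − F(b))/(1 − F(b)))^(N(M−1)) · N·((F(x) − F(β))/(1 − F(β)))^(N−1) · f(x)/(1 − F(β)) dx. Then P(b) = 1/M, and P is differentiable at β = b with P′(b) = (N·f(b)/(1 − F(b))) · (M−1)/(M·(NM−1)). -/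
/-!
Write `G_c x = (F x - F c) / (1 - F c)`, `a = N (M - 1)`, `n = N` and `t = G_b β`; then
`G_b = t + (1 - t) G_β`. For `β ≥ b` the substitution `v = G_β x` turns `P β` into
`∫₀¹ (t + (1 - t) v)^a n v^(n-1) dv`; for `β ≤ b` the substitution `u = G_b x` turns it into
`∫₀¹ u^a n (u - t)^(n-1) du / (1 - t)^n`. At `t = 0` both integrals equal `n / (a + n) = 1 / M`,
and differentiating under the integral sign gives both the derivative
`a n / ((a + n - 1)(a + n))` there. So the one-sided derivatives of `P` at `b` agree, and the chain
rule through `G_b' b = f b / (1 - F b)` gives the formula.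
-/

open intervalIntegral Set Filter Topology MeasureTheory

theorem integral_comp_mul_deriv_of_nonneg {g φ φ' : ℝ → ℝ} {a b : ℝ} (hab : a ≤ b)
    (hg : Continuous g) (hφ : ContinuousOn φ (Icc a b))
    (hφ' : ∀ x ∈ Ioo a b, HasDerivAt φ (φ' x) x)
    (hnonneg : ∀ x ∈ Ioo a b, 0 ≤ g (φ x) * φ' x) :
    ∫ x in a..b, g (φ x) * φ' x = ∫ u in φ a..φ b, g u := by
  set G : ℝ → ℝ := fun u => ∫ s in (0 : ℝ)..u, g s
  have hG : ∀ u, HasDerivAt G (g u) u := fun u => (hg.integral_hasStrictDerivAt 0 u).hasDerivAt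
  have hGφ : ContinuousOn (G ∘ φ) (Icc a b) :=
    (continuous_iff_continuousAt.2 fun u => (hG u).continuousAt).comp_continuousOn hφ
  have hGφ' : ∀ x ∈ Ioo a b, HasDerivAt (G ∘ φ) (g (φ x) * φ' x) x :=
    fun x hx => (hG (φ x)).comp x (hφ' x hx)
  have hint : IntervalIntegrable (fun x => g (φ x) * φ' x) volume a b :=
    intervalIntegrable_deriv_of_nonneg (by rwa [uIcc_of_le hab])
      (by simpa [hab] using hGφ') (by simpa [hab] using hnonneg)
  rw [integral_eq_sub_of_hasDerivAt_of_le hab hGφ hGφ' hint, Function.comp_apply,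
    Function.comp_apply, integral_interval_sub_left (hg.intervalIntegrable _ _)
      (hg.intervalIntegrable _ _)]

theorem hasDerivAt_intervalIntegral_of_continuous_deriv {F F' : ℝ → ℝ → ℝ} {a b : ℝ}
    (t₀ : ℝ)
    (hF : ∀ t, Continuous (F t)) (hF' : Continuous (Function.uncurry F'))
    (hderiv : ∀ t u, HasDerivAt (F · u) (F' t u) t) :
    HasDerivAt (fun t => ∫ u in a..b, F t u) (∫ u in a..b, F' t₀ u) t₀ := by
  obtain ⟨C, hC⟩ := (isCompact_closedBall t₀ 1 |>.prod isCompact_uIcc)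
    |>.exists_bound_of_continuousOn hF'.continuousOn
  refine (hasDerivAt_integral_of_dominated_loc_of_deriv_le (bound := fun _ => C)
    (Metric.ball_mem_nhds t₀ one_pos) (Eventually.of_forall fun t => (hF t).aestronglyMeasurable)
    ((hF t₀).intervalIntegrable _ _)
    (hF'.comp (Continuous.prodMk_right t₀)).aestronglyMeasurable ?_ intervalIntegrable_const
    (ae_of_all _ fun u _ t _ => hderiv t u)).2
  exact ae_of_all _ fun u hu t ht =>
    hC (t, u) ⟨Metric.ball_subset_closedBall ht, uIoc_subset_uIcc hu⟩

theorem hasDerivAt_of_eventuallyEq_nhdsLE_nhdsGE {P g h : ℝ → ℝ} {x d : ℝ}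
    (hg : HasDerivAt g d x) (hh : HasDerivAt h d x)
    (hPg : P =ᶠ[𝓝[≤] x] g) (hPh : P =ᶠ[𝓝[≥] x] h) : HasDerivAt P d x := by
  have := (hg.hasDerivWithinAt.congr_of_eventuallyEq hPg (hPg.eq_of_nhdsWithin self_mem_Iic)).union
    (hh.hasDerivWithinAt.congr_of_eventuallyEq hPh (hPh.eq_of_nhdsWithin self_mem_Ici))
  rwa [Iic_union_Ici, hasDerivWithinAt_univ] at this

noncomputable def truncCDF (F : ℝ → ℝ) (c x : ℝ) : ℝ := (F x - F c) / (1 - F c)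

section truncCDF

variable {F : ℝ → ℝ} {c d x : ℝ}

@[simp] theorem truncCDF_self : truncCDF F c c = 0 := by simp [truncCDF]

theorem truncCDF_of_eq_one (hx : F x = 1) (hc : F c ≠ 1) : truncCDF F c x = 1 := by
  rw [truncCDF, hx, div_self (sub_ne_zero.2 hc.symm)]

theorem one_sub_truncCDF (hc : F c ≠ 1) : 1 - truncCDF F c d = (1 - F d) / (1 - F c) := by
  have := sub_ne_zero.2 hc.symm
  rw [truncCDF]
  field_simp
  ring

theorem truncCDF_eq_add_mul (hc : F c ≠ 1) (hd : F d ≠ 1) :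
    truncCDF F c x = truncCDF F c d + (1 - truncCDF F c d) * truncCDF F d x := by
  have := sub_ne_zero.2 hd.symm
  rw [one_sub_truncCDF hc, truncCDF, truncCDF, truncCDF]
  field_simp
  ring

end truncCDF

noncomputable def winProbAbove (a n : ℕ) (t : ℝ) : ℝ :=
  ∫ v in (0 : ℝ)..1, (t + (1 - t) * v) ^ a * (n * v ^ (n - 1))

noncomputable def winProbBelow (a n : ℕ) (t : ℝ) : ℝ :=
  ∫ u in (0 : ℝ)..1, u ^ a * (n * (u - t) ^ (n - 1)) / (1 - t) ^ n

theorem winProbAbove_zero {a n : ℕ} (hn : 1 ≤ n) : winProbAbove a n 0 = n / (a + n) := by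
  obtain ⟨m, rfl⟩ := Nat.exists_eq_add_of_le' hn
  have key : ∀ v : ℝ, (0 + (1 - 0) * v) ^ a * ((m + 1 : ℕ) * v ^ (m + 1 - 1))
      = (m + 1 : ℝ) * v ^ (a + m) := by
    intro v; push_cast; ring
  simp only [winProbAbove, key, intervalIntegral.integral_const_mul, integral_pow]
  push_cast
  field_simp
  ring

theorem hasDerivAt_winProbAbove {a n : ℕ} (ha : 1 ≤ a) (hn : 1 ≤ n) :
    HasDerivAt (winProbAbove a n) (a * n / ((a + n - 1) * (a + n))) 0 := by
  obtain ⟨k, rfl⟩ := Nat.exists_eq_add_of_le' ha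
  obtain ⟨m, rfl⟩ := Nat.exists_eq_add_of_le' hn
  have h := hasDerivAt_intervalIntegral_of_continuous_deriv (a := 0) (b := 1)
    (F := fun t v => (t + (1 - t) * v) ^ (k + 1) * ((m + 1 : ℕ) * v ^ (m + 1 - 1)))
    (F' := fun t v => (k + 1 : ℕ) * (t + (1 - t) * v) ^ k * (1 - v) * ((m + 1 : ℕ) * v ^ m))
    0 (fun t => by fun_prop) (by fun_prop) (fun t v =>
      ((((hasDerivAt_id' t).add (((hasDerivAt_id' t).const_sub 1).mul_const v)).pow
        (k + 1)).mul_const _).congr_deriv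
          (by simp only [Pi.add_apply, Nat.add_sub_cancel]; ring))
  have hval :
      ∫ v in (0 : ℝ)..1, (k + 1 : ℕ) * (0 + (1 - 0) * v) ^ k * (1 - v) * ((m + 1 : ℕ) * v ^ m)
        = (k + 1) * (m + 1) / ((k + m + 1) * (k + m + 2)) := by
    rw [integral_congr (g := fun v => ((k + 1) * (m + 1) : ℝ) * (v ^ (k + m) - v ^ (k + m + 1)))
      (fun v _ => by push_cast; ring), intervalIntegral.integral_const_mul,
      intervalIntegral.integral_sub (intervalIntegrable_pow _) (intervalIntegrable_pow _),
      integral_pow, integral_pow]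
    push_cast
    field_simp
    ring
  rw [hval] at h
  exact h.congr_deriv (by push_cast; ring)

theorem hasDerivAt_winProbBelow {a n : ℕ} (ha : 1 ≤ a) (hn : 1 ≤ n) :
    HasDerivAt (winProbBelow a n) (a * n / ((a + n - 1) * (a + n))) 0 := by
  obtain ⟨k, rfl⟩ := Nat.exists_eq_add_of_le' ha
  obtain ⟨m, rfl⟩ := Nat.exists_eq_add_of_le' hn
  have hnum := hasDerivAt_intervalIntegral_of_continuous_deriv (a := 0) (b := 1)
    (F := fun t u => u ^ (k + 1) * ((m + 1 : ℕ) * (u - t) ^ m))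
    (F' := fun t u => -(u ^ (k + 1) * ((m + 1 : ℕ) * (m * (u - t) ^ (m - 1)))))
    0 (fun t => by fun_prop) (by fun_prop) (fun t u =>
      (((((hasDerivAt_id' t).const_sub u).pow m).const_mul _).const_mul _).congr_deriv
        (by ring))
  have hden : HasDerivAt (fun t : ℝ => (1 - t) ^ (m + 1)) (-(m + 1)) 0 :=
    (((hasDerivAt_id' 0).const_sub 1).pow (m + 1)).congr_deriv (by simp)
  have hnum0 :
      ∫ u in (0 : ℝ)..1, u ^ (k + 1) * ((m + 1 : ℕ) * (u - 0) ^ m) = (m + 1) / (k + m + 2) := by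
    rw [integral_congr (g := fun u => ((m + 1) : ℝ) * u ^ (k + m + 1))
      (fun v _ => by push_cast; ring), intervalIntegral.integral_const_mul, integral_pow]
    push_cast
    field_simp
    ring
  have hnum' :
      ∫ u in (0 : ℝ)..1, -(u ^ (k + 1) * ((m + 1 : ℕ) * (m * (u - 0) ^ (m - 1))))
        = -((m + 1) * m / (k + m + 1)) := by
    have key : ∀ u : ℝ, u ^ (k + 1) * ((m + 1 : ℕ) * (m * (u - 0) ^ (m - 1)))
        = ((m + 1) * m : ℝ) * u ^ (k + m) := by
      intro u
      rcases m with _ | j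
      · simp
      · simp only [sub_zero, Nat.add_sub_cancel]
        push_cast
        ring
    simp only [key]
    rw [intervalIntegral.integral_neg, intervalIntegral.integral_const_mul, integral_pow]
    rw [one_pow, zero_pow (by omega), sub_zero]
    push_cast
    field_simp
  have hsplit : winProbBelow (k + 1) (m + 1) =
      (fun t => ∫ u in (0 : ℝ)..1, u ^ (k + 1) * ((m + 1 : ℕ) * (u - t) ^ m)) /
        fun t => (1 - t) ^ (m + 1) := by
    ext t
    simp [winProbBelow, intervalIntegral.integral_div]
  rw [hsplit]
  refine (hnum.div hden (by norm_num)).congr_deriv ?_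
  rw [hnum0, hnum']
  push_cast
  rw [show (k : ℝ) + 1 + (m + 1) - 1 = k + m + 1 by ring,
    show (k : ℝ) + 1 + (m + 1) = k + m + 2 by ring]
  field_simp
  ring

section Density

variable {K : ℝ} {F f : ℝ → ℝ}

theorem lt_one_of_mem_Ico (hFmono : StrictMonoOn F (Icc 0 K)) (hFK : F K = 1) {c : ℝ}
    (hc : c ∈ Ico 0 K) : F c < 1 :=
  hFK ▸ hFmono ⟨hc.1, hc.2.le⟩ ⟨hc.1.trans hc.2.le, le_rfl⟩ hc.2

theorem truncCDF_mem_Icc (hFmono : StrictMonoOn F (Icc 0 K)) (hFK : F K = 1) {c x : ℝ}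
    (hc : 0 ≤ c) (hcx : c ≤ x) (hx : x ≤ K) (hcK : c < K) : truncCDF F c x ∈ Icc 0 1 := by
  have hFc : 0 < 1 - F c := sub_pos.2 (lt_one_of_mem_Ico hFmono hFK ⟨hc, hcK⟩)
  have hFcx : F c ≤ F x := hFmono.monotoneOn ⟨hc, hcK.le⟩ ⟨hc.trans hcx, hx⟩ hcx
  have hFx : F x ≤ 1 :=
    hFK ▸ hFmono.monotoneOn ⟨hc.trans hcx, hx⟩ ⟨hc.trans hcK.le, le_rfl⟩ hx
  refine ⟨div_nonneg (by linarith) hFc.le, ?_⟩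
  rw [truncCDF, div_le_one hFc]
  linarith

theorem integral_comp_truncCDF_mul {g : ℝ → ℝ} {c : ℝ} (hg : Continuous g)
    (hg_nonneg : ∀ u ∈ Icc (0 : ℝ) 1, 0 ≤ g u)
    (hFcont : ContinuousOn F (Icc 0 K)) (hFmono : StrictMonoOn F (Icc 0 K)) (hFK : F K = 1)
    (hderiv : ∀ x ∈ Ioo 0 K, HasDerivAt F (f x) x) (hfpos : ∀ x ∈ Ioo 0 K, 0 < f x)
    (hc : c ∈ Ico 0 K) :
    ∫ x in c..K, g (truncCDF F c x) * (f x / (1 - F c)) = ∫ u in (0 : ℝ)..1, g u := by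
  have hcK : Icc c K ⊆ Icc 0 K := Icc_subset_Icc_left hc.1
  have hFc := lt_one_of_mem_Ico hFmono hFK hc
  have hφ : ContinuousOn (truncCDF F c) (Icc c K) :=
    (hFcont.mono hcK).sub continuousOn_const |>.div_const _
  have hφ' : ∀ x ∈ Ioo c K, HasDerivAt (truncCDF F c) (f x / (1 - F c)) x :=
    fun x hx => ((hderiv x ⟨hc.1.trans_lt hx.1, hx.2⟩).sub_const _).div_const _
  rw [integral_comp_mul_deriv_of_nonneg hc.2.le hg hφ hφ', truncCDF_self,
    truncCDF_of_eq_one hFK hFc.ne]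
  intro x hx
  exact mul_nonneg (hg_nonneg _ (truncCDF_mem_Icc hFmono hFK hc.1 hx.1.le hx.2.le hc.2))
    (div_nonneg (hfpos x ⟨hc.1.trans_lt hx.1, hx.2⟩).le (sub_pos.2 hFc).le)

theorem integral_eq_winProbAbove (a n : ℕ) {b β : ℝ}
    (hFcont : ContinuousOn F (Icc 0 K)) (hFmono : StrictMonoOn F (Icc 0 K)) (hFK : F K = 1)
    (hderiv : ∀ x ∈ Ioo 0 K, HasDerivAt F (f x) x) (hfpos : ∀ x ∈ Ioo 0 K, 0 < f x)
    (hb : 0 ≤ b) (hbβ : b ≤ β) (hβ : β < K) :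
    ∫ x in β..K, truncCDF F b x ^ a * (n * truncCDF F β x ^ (n - 1)) * (f x / (1 - F β))
      = winProbAbove a n (truncCDF F b β) := by
  have hFb := lt_one_of_mem_Ico hFmono hFK ⟨hb, hbβ.trans_lt hβ⟩
  have hFβ := lt_one_of_mem_Ico hFmono hFK ⟨hb.trans hbβ, hβ⟩
  set t := truncCDF F b β
  have ht : t ∈ Icc 0 1 := truncCDF_mem_Icc hFmono hFK hb hbβ hβ.le (hbβ.trans_lt hβ)
  have hG : ∀ x, truncCDF F b x = t + (1 - t) * truncCDF F β x :=
    fun x => truncCDF_eq_add_mul hFb.ne hFβ.ne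
  calc _ = ∫ x in β..K, (fun v => (t + (1 - t) * v) ^ a * (n * v ^ (n - 1))) (truncCDF F β x)
        * (f x / (1 - F β)) := integral_congr fun x _ => by rw [hG]
    _ = ∫ v in (0 : ℝ)..1, (t + (1 - t) * v) ^ a * (n * v ^ (n - 1)) := by
      refine integral_comp_truncCDF_mul
        (g := fun v => (t + (1 - t) * v) ^ a * (n * v ^ (n - 1)))
        (by fun_prop) (fun v hv => ?_) hFcont hFmono hFK hderiv hfpos ⟨hb.trans hbβ, hβ⟩
      exact mul_nonneg (pow_nonneg (by nlinarith [ht.1, ht.2, hv.1]) _)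
        (mul_nonneg (Nat.cast_nonneg _) (pow_nonneg hv.1 _))

theorem integral_eq_winProbBelow (a : ℕ) {n : ℕ} (hn : 1 ≤ n) {b β : ℝ}
    (hFcont : ContinuousOn F (Icc 0 K)) (hFmono : StrictMonoOn F (Icc 0 K)) (hFK : F K = 1)
    (hderiv : ∀ x ∈ Ioo 0 K, HasDerivAt F (f x) x) (hfpos : ∀ x ∈ Ioo 0 K, 0 < f x)
    (hβ : 0 ≤ β) (hβb : β ≤ b) (hb : b < K) :
    ∫ x in b..K, truncCDF F b x ^ a * (n * truncCDF F β x ^ (n - 1)) * (f x / (1 - F β))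
      = winProbBelow a n (truncCDF F b β) := by
  have hFb := lt_one_of_mem_Ico hFmono hFK ⟨hβ.trans hβb, hb⟩
  have hFβ := lt_one_of_mem_Ico hFmono hFK ⟨hβ, hβb.trans_lt hb⟩
  set t := truncCDF F b β
  have ht : t ≤ 0 := div_nonpos_of_nonpos_of_nonneg
    (sub_nonpos.2 (hFmono.monotoneOn ⟨hβ, hβb.trans hb.le⟩ ⟨hβ.trans hβb, hb.le⟩ hβb))
    (sub_pos.2 hFb).le
  have hFβ_eq : 1 - F β = (1 - t) * (1 - F b) := by
    rw [one_sub_truncCDF hFb.ne, div_mul_cancel₀ _ (sub_pos.2 hFb).ne']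
  have h1t : 1 - t ≠ 0 := by linarith
  have hG : ∀ x, truncCDF F b x = t + (1 - t) * truncCDF F β x :=
    fun x => truncCDF_eq_add_mul hFb.ne hFβ.ne
  calc _ = ∫ x in b..K, (fun u => u ^ a * (n * (u - t) ^ (n - 1)) / (1 - t) ^ n) (truncCDF F b x)
        * (f x / (1 - F b)) := by
        refine integral_congr fun x _ => ?_
        obtain ⟨m, rfl⟩ := Nat.exists_eq_add_of_le' hn
        have := (sub_pos.2 hFb).ne'
        simp only [hG, add_sub_cancel_left, mul_pow, hFβ_eq, Nat.add_sub_cancel]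
        field_simp
        ring
    _ = ∫ u in (0 : ℝ)..1, u ^ a * (n * (u - t) ^ (n - 1)) / (1 - t) ^ n := by
      refine integral_comp_truncCDF_mul
        (g := fun u => u ^ a * (n * (u - t) ^ (n - 1)) / (1 - t) ^ n)
        (by fun_prop) (fun u hu => ?_) hFcont hFmono hFK hderiv hfpos ⟨hβ.trans hβb, hb⟩
      exact div_nonneg (mul_nonneg (pow_nonneg hu.1 _)
        (mul_nonneg (Nat.cast_nonneg _) (pow_nonneg (by linarith [hu.1]) _)))
        (pow_nonneg (by linarith) _)

end Density

theorem stmt_11_general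
    (K : ℝ)
    (F f : ℝ → ℝ)
    (hFcont : ContinuousOn F (Set.Icc 0 K))
    (hFmono : StrictMonoOn F (Set.Icc 0 K))
    (hFK : F K = 1)
    (hderiv : ∀ x ∈ Set.Ioo 0 K, HasDerivAt F (f x) x)
    (hfpos : ∀ x ∈ Set.Ioo 0 K, 0 < f x)
    (N M : ℕ) (hN : 1 ≤ N) (hM : 2 ≤ M)
    (b : ℝ) (hb : b ∈ Set.Ioo 0 K)
    (P : ℝ → ℝ)
    (hP : ∀ β ∈ Set.Ioo (0:ℝ) K,
      P β = ∫ x in (max b β)..K,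
        ((F x - F b) / (1 - F b)) ^ (N * (M - 1))
          * ((N : ℝ) * ((F x - F β) / (1 - F β)) ^ (N - 1))
          * (f x / (1 - F β))) :
    P b = 1 / M ∧
    HasDerivAt P
      (((N : ℝ) * f b / (1 - F b)) * (((M : ℝ) - 1) / (M * ((N : ℝ) * M - 1))))
      b := by
  obtain ⟨hb0, hbK⟩ := hb
  have ha : 1 ≤ N * (M - 1) := Nat.mul_pos hN (by omega)
  have hAbove : P =ᶠ[𝓝[≥] b] winProbAbove (N * (M - 1)) N ∘ truncCDF F b := by
    filter_upwards [Ico_mem_nhdsGE hbK] with β hβ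
    rw [hP β ⟨hb0.trans_le hβ.1, hβ.2⟩, max_eq_right hβ.1]
    exact integral_eq_winProbAbove _ _ hFcont hFmono hFK hderiv hfpos hb0.le hβ.1 hβ.2
  have hBelow : P =ᶠ[𝓝[≤] b] winProbBelow (N * (M - 1)) N ∘ truncCDF F b := by
    filter_upwards [Ioc_mem_nhdsLE hb0] with β hβ
    rw [hP β ⟨hβ.1, hβ.2.trans_lt hbK⟩, max_eq_left hβ.2]
    exact integral_eq_winProbBelow _ hN hFcont hFmono hFK hderiv hfpos hβ.1.le hβ.2 hbK
  have hG : HasDerivAt (truncCDF F b) (f b / (1 - F b)) b :=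
    ((hderiv b ⟨hb0, hbK⟩).sub_const _).div_const _
  have hcast : ((N * (M - 1) : ℕ) : ℝ) = N * (M - 1) := by
    rw [Nat.cast_mul, Nat.cast_sub (by omega), Nat.cast_one]
  have hNM : (N : ℝ) * M - 1 ≠ 0 := by
    have : (2 : ℝ) ≤ N * M := by exact_mod_cast (by nlinarith : 2 ≤ N * M)
    linarith
  constructor
  · rw [hAbove.eq_of_nhdsWithin self_mem_Ici, Function.comp_apply, truncCDF_self,
      winProbAbove_zero hN, hcast, show (N : ℝ) * (M - 1) + N = N * M by ring]
    field_simp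
  · refine (hasDerivAt_of_eventuallyEq_nhdsLE_nhdsGE
      ((hasDerivAt_winProbBelow ha hN).comp_of_eq b hG truncCDF_self.symm)
      ((hasDerivAt_winProbAbove ha hN).comp_of_eq b hG truncCDF_self.symm)
      hBelow hAbove).congr_deriv ?_
    rw [hcast, show (N : ℝ) * (M - 1) + N - 1 = N * M - 1 by ring,
      show (N : ℝ) * (M - 1) + N = N * M by ring]
    field_simp

/-- A deviating designer's winning probability `P(β)` satisfies `P(b) = 1/M`
at the symmetric point, and `P` is differentiable at `β = b` with
`P′(b) = (N·f(b)/(1 − F(b))) · (M−1)/(M·(NM−1))`. -/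
theorem stmt_11
    (K : ℝ) (hK : 0 < K)
    (F f : ℝ → ℝ)
    (hFcont : ContinuousOn F (Set.Icc 0 K))
    (hFmono : StrictMonoOn F (Set.Icc 0 K))
    (hF0 : F 0 = 0) (hFK : F K = 1)
    (hderiv : ∀ x ∈ Set.Ioo 0 K, HasDerivAt F (f x) x)
    (hfpos : ∀ x ∈ Set.Ioo 0 K, 0 < f x)
    (hfcont : ContinuousOn f (Set.Ioo 0 K))
    (N M : ℕ) (hN : 1 ≤ N) (hM : 2 ≤ M)
    (b : ℝ) (hb : b ∈ Set.Ioo 0 K)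
    (P : ℝ → ℝ)
    (hP : ∀ β ∈ Set.Ioo (0:ℝ) K,
      P β = ∫ x in (max b β)..K,
        ((F x - F b) / (1 - F b)) ^ (N * (M - 1))
          * ((N : ℝ) * ((F x - F β) / (1 - F β)) ^ (N - 1))
          * (f x / (1 - F β))) :
    P b = 1 / M ∧
    HasDerivAt P
      (((N : ℝ) * f b / (1 - F b)) * (((M : ℝ) - 1) / (M * ((N : ℝ) * M - 1))))
      b :=
  stmt_11_general K F f hFcont hFmono hFK hderiv hfpos N M hN hM b hb P hP
end

section
/- Let F be continuous and strictly increasing on [0,K] with F(0)=0, F(K)=1, and derivative f > 0 on (0,K). Let N ≥ 1, M ≥ 2 be integers and c, Ω > 0 with 0 < c·M·(NM−1)/(Ω·(M−1)) < 1. Then there is a unique b_D ∈ (0,K) with F(b_D) = 1 − c·M·(NM−1)/(Ω·(M−1)), and b_D is the unique b ∈ (0,K) satisfying the designer first-order condition Ω·(N·f(b)/(1 − F(b)))·(M−1)/(M·(NM−1)) = N·c·f(b)/(1 − F(b))². In particular, the designer equilibrium acceptance probability 1 − F(b_D) depends only on M, N, c, Ω and not on F. -/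
/-!
By the intermediate value theorem and strict monotonicity, `F` takes the value
`1 - c·M·(NM−1)/(Ω·(M−1))` at exactly one point of `(0,K)`. After dividing by the positive
common factor `N·f(b)/(1−F(b))²`, the first-order condition becomes the linear equation
`Ω·(M−1)·(1−F(b)) = c·M·(NM−1)` in `1 − F(b)`, so it singles out the same point.
-/

theorem StrictMonoOn.existsUnique_mem_Ioo_eq {F : ℝ → ℝ} {a b y : ℝ} (hab : a ≤ b)
    (hcont : ContinuousOn F (Set.Icc a b)) (hmono : StrictMonoOn F (Set.Icc a b))
    (hy : y ∈ Set.Ioo (F a) (F b)) :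
    ∃ x ∈ Set.Ioo a b, F x = y ∧ ∀ x' ∈ Set.Ioo a b, F x' = y → x' = x := by
  obtain ⟨x, hx, hFx⟩ := intermediate_value_Ioo hab hcont hy
  refine ⟨x, hx, hFx, fun x' hx' hFx' => ?_⟩
  exact hmono.injOn (Set.mem_Icc_of_Ioo hx') (Set.mem_Icc_of_Ioo hx) (hFx'.trans hFx.symm)

theorem mul_div_mul_div_eq_div_sq_iff {𝕜 : Type*} [Field 𝕜] {Ω n φ u a m k c : 𝕜}
    (hn : n ≠ 0) (hφ : φ ≠ 0) (hu : u ≠ 0) (hm : m ≠ 0) (hk : k ≠ 0) (hΩa : Ω * a ≠ 0) :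
    Ω * (n * φ / u) * (a / (m * k)) = n * c * φ / u ^ 2 ↔ u = c * m * k / (Ω * a) := by
  rw [eq_div_iff hΩa]
  field_simp

theorem stmt_12_general
    (K : ℝ) (hK : 0 < K)
    (F f : ℝ → ℝ)
    (hFcont : ContinuousOn F (Set.Icc 0 K))
    (hFmono : StrictMonoOn F (Set.Icc 0 K))
    (hF0 : F 0 = 0) (hFK : F K = 1)
    (hfpos : ∀ x ∈ Set.Ioo 0 K, 0 < f x)
    (N M : ℕ) (hN : 1 ≤ N) (hM : 2 ≤ M)
    (c Ω : ℝ) (hΩ : 0 < Ω)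
    (hratio : 0 < c * M * ((N : ℝ) * M - 1) / (Ω * ((M : ℝ) - 1)))
    (hratio1 : c * M * ((N : ℝ) * M - 1) / (Ω * ((M : ℝ) - 1)) < 1) :
    ∃ bD ∈ Set.Ioo (0:ℝ) K,
      F bD = 1 - c * M * ((N : ℝ) * M - 1) / (Ω * ((M : ℝ) - 1)) ∧
      (∀ b' ∈ Set.Ioo (0:ℝ) K,
        F b' = 1 - c * M * ((N : ℝ) * M - 1) / (Ω * ((M : ℝ) - 1)) → b' = bD) ∧
      (∀ b ∈ Set.Ioo (0:ℝ) K,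
        (Ω * ((N : ℝ) * f b / (1 - F b)) * (((M : ℝ) - 1) / (M * ((N : ℝ) * M - 1)))
            = (N : ℝ) * c * f b / (1 - F b) ^ 2)
          ↔ b = bD) := by
  set r := c * M * ((N : ℝ) * M - 1) / (Ω * ((M : ℝ) - 1))
  have hN1 : (1 : ℝ) ≤ N := by exact_mod_cast hN
  have hM1 : (1 : ℝ) < M := by exact_mod_cast hM
  have hNM : (1 : ℝ) < N * M := by nlinarith
  obtain ⟨bD, hbD, hFbD, huniq⟩ :=
    hFmono.existsUnique_mem_Ioo_eq hK.le hFcont (y := 1 - r)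
      (by rw [hF0, hFK]; constructor <;> linarith)
  refine ⟨bD, hbD, hFbD, huniq, fun b hb => ?_⟩
  have hFb : F b < 1 :=
    hFK ▸ hFmono (Set.mem_Icc_of_Ioo hb) (Set.right_mem_Icc.2 hK.le) hb.2
  rw [mul_div_mul_div_eq_div_sq_iff (by positivity) (hfpos b hb).ne' (by linarith)
    (by positivity) (by linarith) (by nlinarith)]
  constructor
  · exact fun h => huniq b hb (by linarith)
  · rintro rfl
    linarith

/-- The designer equilibrium threshold: there is a unique `b_D ∈ (0,K)` with
`F b_D = 1 − c·M·(NM−1)/(Ω·(M−1))`, and `b_D` is the unique point of `(0,K)`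
satisfying the designer first-order condition
`Ω·(N·f(b)/(1−F(b)))·(M−1)/(M·(NM−1)) = N·c·f(b)/(1−F(b))²`.
The acceptance probability `1 − F b_D` is distribution-free. -/
theorem stmt_12
    (K : ℝ) (hK : 0 < K)
    (F f : ℝ → ℝ)
    (hFcont : ContinuousOn F (Set.Icc 0 K))
    (hFmono : StrictMonoOn F (Set.Icc 0 K))
    (hF0 : F 0 = 0) (hFK : F K = 1)
    (hderiv : ∀ x ∈ Set.Ioo 0 K, HasDerivAt F (f x) x)
    (hfpos : ∀ x ∈ Set.Ioo 0 K, 0 < f x)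
    (N M : ℕ) (hN : 1 ≤ N) (hM : 2 ≤ M)
    (c Ω : ℝ) (hc : 0 < c) (hΩ : 0 < Ω)
    (hratio : 0 < c * M * ((N : ℝ) * M - 1) / (Ω * ((M : ℝ) - 1)))
    (hratio1 : c * M * ((N : ℝ) * M - 1) / (Ω * ((M : ℝ) - 1)) < 1) :
    ∃ bD ∈ Set.Ioo (0:ℝ) K,
      F bD = 1 - c * M * ((N : ℝ) * M - 1) / (Ω * ((M : ℝ) - 1)) ∧
      (∀ b' ∈ Set.Ioo (0:ℝ) K,
        F b' = 1 - c * M * ((N : ℝ) * M - 1) / (Ω * ((M : ℝ) - 1)) → b' = bD) ∧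
      (∀ b ∈ Set.Ioo (0:ℝ) K,
        (Ω * ((N : ℝ) * f b / (1 - F b)) * (((M : ℝ) - 1) / (M * ((N : ℝ) * M - 1)))
            = (N : ℝ) * c * f b / (1 - F b) ^ 2)
          ↔ b = bD) :=
  stmt_12_general K hK F f hFcont hFmono hF0 hFK hfpos N M hN hM c Ω hΩ hratio hratio1
end

section
/- For all integers N ≥ 2 and M ≥ 2: M·(NM−1) > N·(M−1); hence for any c, W > 0, c·M·(NM−1)/(W·(M−1)) > N·c/W. Consequently, if F is strictly increasing on [0,K] and b_D, λ ∈ (0,K) satisfy F(b_D) = 1 − c·M·(NM−1)/(W·(M−1)) and F(λ) = 1 − N·c/W (both quantities lying in (0,1)), then b_D < λ: with teams of N ≥ 2 workers and meta-prize equal to the individual prize, the designer-equilibrium threshold is strictly lower than the individual-competition threshold. -/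
/-- Designer competition induces less search than individual competition:
`M·(NM−1) > N·(M−1)`, hence `c·M·(NM−1)/(W·(M−1)) > N·c/W`, and consequently
the designer-equilibrium threshold `b_D` is strictly below the
individual-competition threshold `λ`. -/
theorem stmt_14
    (K : ℝ) (hK : 0 < K)
    (F : ℝ → ℝ)
    (hFcont : ContinuousOn F (Set.Icc 0 K))
    (hFmono : StrictMonoOn F (Set.Icc 0 K))
    (hF0 : F 0 = 0) (hFK : F K = 1)
    (N M : ℕ) (hN : 2 ≤ N) (hM : 2 ≤ M)
    (c W : ℝ) (hc : 0 < c) (hW : 0 < W)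
    (bD lam : ℝ) (hbD : bD ∈ Set.Ioo 0 K) (hlam : lam ∈ Set.Ioo 0 K)
    (hqD : c * M * ((N : ℝ) * M - 1) / (W * ((M : ℝ) - 1)) ∈ Set.Ioo (0:ℝ) 1)
    (hqI : (N : ℝ) * c / W ∈ Set.Ioo (0:ℝ) 1)
    (hFbD : F bD = 1 - c * M * ((N : ℝ) * M - 1) / (W * ((M : ℝ) - 1)))
    (hFlam : F lam = 1 - (N : ℝ) * c / W) :
    (M : ℝ) * ((N : ℝ) * M - 1) > (N : ℝ) * ((M : ℝ) - 1) ∧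
    c * M * ((N : ℝ) * M - 1) / (W * ((M : ℝ) - 1)) > (N : ℝ) * c / W ∧
    bD < lam := by
  have hN2 : (2:ℝ) ≤ N := by exact_mod_cast hN
  have hM2 : (2:ℝ) ≤ M := by exact_mod_cast hM
  have hM1 : (0:ℝ) < (M:ℝ) - 1 := by linarith
  have h1 : (M : ℝ) * ((N : ℝ) * M - 1) > (N : ℝ) * ((M : ℝ) - 1) := by nlinarith [mul_pos hM1 (show (0:ℝ) < (N:ℝ)*(M:ℝ)-1 by nlinarith), sq_nonneg ((M:ℝ)-1), mul_nonneg (sub_nonneg.2 hN2) (sub_nonneg.2 hM2)]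
  have h2 : c * M * ((N : ℝ) * M - 1) / (W * ((M : ℝ) - 1)) > (N : ℝ) * c / W := by
    rw [gt_iff_lt, div_lt_div_iff₀ hW (by positivity)]
    nlinarith [mul_pos hc hM1, mul_pos hW hc, mul_pos (mul_pos hW hc) hM1, h1]
  refine ⟨h1, h2, ?_⟩
  have : F bD < F lam := by rw [hFbD, hFlam]; linarith
  by_contra h
  exact absurd (hFmono.monotoneOn ⟨le_of_lt hlam.1, le_of_lt hlam.2⟩ ⟨le_of_lt hbD.1, le_of_lt hbD.2⟩ (not_lt.1 h)) (not_le.2 this)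
end

section
/- Let F be continuous and strictly increasing on [0,K] with F(0)=0, F(K)=1, and continuous derivative f > 0 on (0,K). Let N ≥ 1 be an integer and c > 0. Define the planner's objective 𝒲(b) = K − ∫_b^K ((F(x) − F(b))/(1 − F(b)))^N dx − N·c/(1 − F(b)) for b ∈ (0,K). Then 𝒲 is differentiable on (0,K) with 𝒲′(b) = (N·f(b)/(1 − F(b))²) · ( ∫_b^K ((F(x) − F(b))/(1 − F(b)))^(N−1) · (1 − F(x)) dx − c ). In particular, b is a critical point of 𝒲 if and only if ∫_b^K ((F(x) − F(b))/(1 − F(b)))^(N−1)·(1 − F(x)) dx = c (the planner's first-order condition). -/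
/-!
Let `Φ(a) = ∫_a^K (g x - g a)^(n+1) dx`. Expanding the power binomially turns `Φ` into a finite
sum of products `(-g a)^(n+1-m) · ∫_a^K g^m`, each differentiable by the fundamental theorem of
calculus. The boundary terms recombine to `(g b - g b)^(n+1) = 0`, and the remaining terms
recombine to `Φ'(b) = -(n+1) g'(b) ∫_b^K (g x - g b)^n dx`. The planner's objective is
`K - Φ(b)/(1 - g b)^(n+1) - (n+1) c/(1 - g b)`, so its derivative follows from the quotient rule.
-/

open intervalIntegral Finset

lemma sum_choose_succ_mul_sub_mul (n : ℕ) (w : ℕ → ℝ) :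
    ∑ m ∈ range (n + 2), ((n + 1).choose m : ℝ) * ((n + 1 - m : ℕ) : ℝ) * w m
      = (n + 1 : ℝ) * ∑ m ∈ range (n + 1), (n.choose m : ℝ) * w m := by
  rw [sum_range_succ, Nat.sub_self, Nat.cast_zero, mul_zero, zero_mul, add_zero, mul_sum]
  refine sum_congr rfl fun m _ => ?_
  have h : (n.choose m : ℝ) * (n + 1) = ((n + 1).choose m : ℝ) * ((n + 1 - m : ℕ) : ℝ) := by
    exact_mod_cast Nat.choose_mul_succ_eq n m
  rw [← h]
  ring

section IntegralSubPow

variable {g : ℝ → ℝ} {lo K : ℝ}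

lemma uIcc_subset_Icc_of_mem {a : ℝ} (ha : a ∈ Set.Icc lo K) : Set.uIcc a K ⊆ Set.Icc lo K :=
  Set.uIcc_subset_Icc ha (Set.right_mem_Icc.2 (ha.1.trans ha.2))

lemma hasDerivAt_integral_pow_left (hg : ContinuousOn g (Set.Icc lo K)) {b : ℝ}
    (hb : b ∈ Set.Ioo lo K) (k : ℕ) :
    HasDerivAt (fun a => ∫ x in a..K, g x ^ k) (-(g b ^ k)) b := by
  have hgk : ContinuousOn (fun x => g x ^ k) (Set.Icc lo K) := hg.pow k
  refine integral_hasDerivAt_left ?_ ?_ (hgk.continuousAt (Icc_mem_nhds hb.1 hb.2))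
  · exact (hgk.mono (uIcc_subset_Icc_of_mem (Set.Ioo_subset_Icc_self hb))).intervalIntegrable
  · exact (hgk.mono Set.Ioo_subset_Icc_self).stronglyMeasurableAtFilter isOpen_Ioo b hb

lemma integral_sub_pow_eq_sum {a : ℝ} (hg : ContinuousOn g (Set.uIcc a K)) (y : ℝ) (M : ℕ) :
    ∫ x in a..K, (g x - y) ^ M =
      ∑ m ∈ range (M + 1), (M.choose m : ℝ) * ((-y) ^ (M - m) * ∫ x in a..K, g x ^ m) := by
  have hexpand : ∀ x, (g x - y) ^ M
      = ∑ m ∈ range (M + 1), (M.choose m : ℝ) * ((-y) ^ (M - m) * g x ^ m) := fun x => by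
    rw [sub_eq_add_neg, add_pow]
    exact sum_congr rfl fun m _ => by ring
  simp only [hexpand]
  rw [integral_finsetSum (f := fun m x => (M.choose m : ℝ) * ((-y) ^ (M - m) * g x ^ m))
    fun m _ => (continuousOn_const.mul (continuousOn_const.mul (hg.pow m))).intervalIntegrable]
  simp only [integral_const_mul]

theorem hasDerivAt_integral_sub_pow_left (hg : ContinuousOn g (Set.Icc lo K)) {g' b : ℝ}
    (hb : b ∈ Set.Ioo lo K) (hgb : HasDerivAt g g' b) (n : ℕ) :
    HasDerivAt (fun a => ∫ x in a..K, (g x - g a) ^ (n + 1))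
      (-((n + 1 : ℕ) : ℝ) * g' * ∫ x in b..K, (g x - g b) ^ n) b := by
  set A : ℕ → ℝ := fun m => ∫ x in b..K, g x ^ m
  have hsum : HasDerivAt
      (fun a => ∑ m ∈ range (n + 2),
        ((n + 1).choose m : ℝ) * ((-g a) ^ (n + 1 - m) * ∫ x in a..K, g x ^ m))
      (∑ m ∈ range (n + 2), ((n + 1).choose m : ℝ) *
        ((((n + 1 - m : ℕ) : ℝ) * (-g b) ^ (n + 1 - m - 1) * -g') * A m
          + (-g b) ^ (n + 1 - m) * -(g b ^ m))) b :=
    HasDerivAt.fun_sum fun m _ =>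
      ((hgb.neg.pow (n + 1 - m)).mul (hasDerivAt_integral_pow_left hg hb m)).const_mul _
  have hexpand : (fun a => ∫ x in a..K, (g x - g a) ^ (n + 1)) =ᶠ[nhds b]
      fun a => ∑ m ∈ range (n + 2),
        ((n + 1).choose m : ℝ) * ((-g a) ^ (n + 1 - m) * ∫ x in a..K, g x ^ m) := by
    filter_upwards [Icc_mem_nhds hb.1 hb.2] with a ha
    exact integral_sub_pow_eq_sum (hg.mono (uIcc_subset_Icc_of_mem ha)) (g a) (n + 1)
  refine (hsum.congr_of_eventuallyEq hexpand).congr_deriv ?_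
  have hboundary : ∑ m ∈ range (n + 2),
      ((n + 1).choose m : ℝ) * ((-g b) ^ (n + 1 - m) * -(g b ^ m)) = 0 := by
    have h := add_pow (g b) (-g b) (n + 1)
    rw [add_neg_cancel, zero_pow (Nat.succ_ne_zero n)] at h
    calc _ = -∑ m ∈ range (n + 2),
              g b ^ m * (-g b) ^ (n + 1 - m) * ((n + 1).choose m : ℝ) := by
          rw [← sum_neg_distrib]
          exact sum_congr rfl fun m _ => by ring
      _ = 0 := by rw [← h, neg_zero]
  simp only [mul_add]
  rw [sum_add_distrib, hboundary, add_zero,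
    integral_sub_pow_eq_sum (hg.mono (uIcc_subset_Icc_of_mem (Set.Ioo_subset_Icc_self hb)))]
  calc _ = -g' * ∑ m ∈ range (n + 2),
          ((n + 1).choose m : ℝ) * ((n + 1 - m : ℕ) : ℝ) * ((-g b) ^ (n - m) * A m) := by
        rw [mul_sum]
        refine sum_congr rfl fun m _ => ?_
        rw [show n + 1 - m - 1 = n - m by omega]
        ring
    _ = _ := by
        rw [sum_choose_succ_mul_sub_mul]
        push_cast
        ring

lemma integral_div_pow_mul_one_sub {a : ℝ} (hg : ContinuousOn g (Set.uIcc a K)) (y : ℝ)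
    (n : ℕ) :
    ∫ x in a..K, ((g x - y) / (1 - y)) ^ n * (1 - g x)
      = ((1 - y) * (∫ x in a..K, (g x - y) ^ n) - ∫ x in a..K, (g x - y) ^ (n + 1))
        / (1 - y) ^ n := by
  have hpt : ∀ x, ((g x - y) / (1 - y)) ^ n * (1 - g x)
      = ((1 - y) * (g x - y) ^ n - (g x - y) ^ (n + 1)) / (1 - y) ^ n := fun x => by
    rw [div_pow, div_mul_eq_mul_div]
    ring
  have hsub : ContinuousOn (fun x => g x - y) (Set.uIcc a K) := hg.sub continuousOn_const
  simp only [hpt]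
  rw [integral_div, integral_sub (f := fun x => (1 - y) * (g x - y) ^ n)
    (g := fun x => (g x - y) ^ (n + 1))
    (continuousOn_const.mul (hsub.pow n)).intervalIntegrable
    (hsub.pow (n + 1)).intervalIntegrable, integral_const_mul]

theorem hasDerivAt_planner_objective (hg : ContinuousOn g (Set.Icc lo K)) {g' b : ℝ}
    (hb : b ∈ Set.Ioo lo K) (hgb : HasDerivAt g g' b) (hgb1 : g b ≠ 1) (n : ℕ) (c : ℝ) :
    HasDerivAt
      (fun a => K - (∫ x in a..K, ((g x - g a) / (1 - g a)) ^ (n + 1))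
        - ((n + 1 : ℕ) : ℝ) * c / (1 - g a))
      (((n + 1 : ℕ) : ℝ) * g' / (1 - g b) ^ 2
        * ((∫ x in b..K, ((g x - g b) / (1 - g b)) ^ n * (1 - g x)) - c)) b := by
  have hne : 1 - g b ≠ 0 := sub_ne_zero.2 hgb1.symm
  have hderiv := ((hasDerivAt_const b K).fun_sub
    ((hasDerivAt_integral_sub_pow_left hg hb hgb n).fun_div ((hgb.const_sub 1).fun_pow (n + 1))
      (pow_ne_zero _ hne))).fun_sub
    ((hasDerivAt_const b (((n + 1 : ℕ) : ℝ) * c)).fun_div (hgb.const_sub 1) hne)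
  refine (hderiv.congr_deriv ?_).congr_of_eventuallyEq
    (.of_forall fun a => by simp only [div_pow, integral_div])
  rw [integral_div_pow_mul_one_sub
    (hg.mono (uIcc_subset_Icc_of_mem (Set.Ioo_subset_Icc_self hb))), Nat.add_sub_cancel]
  field_simp
  ring

end IntegralSubPow

theorem stmt_15_general
    (K : ℝ)
    (F f : ℝ → ℝ)
    (hFcont : ContinuousOn F (Set.Icc 0 K))
    (hFmono : StrictMonoOn F (Set.Icc 0 K))
    (hFK : F K = 1)
    (hderiv : ∀ x ∈ Set.Ioo 0 K, HasDerivAt F (f x) x)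
    (hfpos : ∀ x ∈ Set.Ioo 0 K, 0 < f x)
    (N : ℕ) (hN : 1 ≤ N)
    (c : ℝ)
    (Wfn : ℝ → ℝ)
    (hW : ∀ b ∈ Set.Ioo (0:ℝ) K,
      Wfn b = K - (∫ x in b..K, ((F x - F b) / (1 - F b)) ^ N)
                - (N : ℝ) * c / (1 - F b)) :
    ∀ b ∈ Set.Ioo (0:ℝ) K,
      HasDerivAt Wfn
        (((N : ℝ) * f b / (1 - F b) ^ 2)
          * ((∫ x in b..K, ((F x - F b) / (1 - F b)) ^ (N - 1) * (1 - F x)) - c))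
        b ∧
      (deriv Wfn b = 0 ↔
        (∫ x in b..K, ((F x - F b) / (1 - F b)) ^ (N - 1) * (1 - F x)) = c) := by
  obtain ⟨n, rfl⟩ : ∃ n, N = n + 1 := ⟨N - 1, by omega⟩
  intro b hb
  have hFb : F b < 1 := hFK ▸ hFmono (Set.Ioo_subset_Icc_self hb)
    (Set.right_mem_Icc.2 (hb.1.trans hb.2).le) hb.2
  have hWderiv := (hasDerivAt_planner_objective hFcont hb (hderiv b hb) hFb.ne n c)
    |>.congr_of_eventuallyEq (Filter.eventually_of_mem (isOpen_Ioo.mem_nhds hb) hW)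
  rw [Nat.add_sub_cancel]
  have hcoeff : ((n + 1 : ℕ) : ℝ) * f b / (1 - F b) ^ 2 ≠ 0 := by
    have hfb := hfpos b hb
    have hFb' : 0 < 1 - F b := sub_pos.2 hFb
    positivity
  refine ⟨hWderiv, ?_⟩
  rw [hWderiv.deriv, mul_eq_zero, or_iff_right hcoeff, sub_eq_zero]

/-- The planner's objective
`𝒲(b) = K − ∫_b^K ((F x − F b)/(1 − F b))^N dx − N·c/(1 − F b)` is
differentiable on `(0,K)` with
`𝒲′(b) = (N·f(b)/(1−F(b))²)·(∫_b^K ((F x − F b)/(1 − F b))^(N−1)·(1 − F x) dx − c)`;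
in particular `b` is a critical point iff the planner's first-order condition
holds. -/
theorem stmt_15
    (K : ℝ) (hK : 0 < K)
    (F f : ℝ → ℝ)
    (hFcont : ContinuousOn F (Set.Icc 0 K))
    (hFmono : StrictMonoOn F (Set.Icc 0 K))
    (hF0 : F 0 = 0) (hFK : F K = 1)
    (hderiv : ∀ x ∈ Set.Ioo 0 K, HasDerivAt F (f x) x)
    (hfpos : ∀ x ∈ Set.Ioo 0 K, 0 < f x)
    (hfcont : ContinuousOn f (Set.Ioo 0 K))
    (N : ℕ) (hN : 1 ≤ N)
    (c : ℝ) (hc : 0 < c)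
    (Wfn : ℝ → ℝ)
    (hW : ∀ b ∈ Set.Ioo (0:ℝ) K,
      Wfn b = K - (∫ x in b..K, ((F x - F b) / (1 - F b)) ^ N)
                - (N : ℝ) * c / (1 - F b)) :
    ∀ b ∈ Set.Ioo (0:ℝ) K,
      HasDerivAt Wfn
        (((N : ℝ) * f b / (1 - F b) ^ 2)
          * ((∫ x in b..K, ((F x - F b) / (1 - F b)) ^ (N - 1) * (1 - F x)) - c))
        b ∧
      (deriv Wfn b = 0 ↔
        (∫ x in b..K, ((F x - F b) / (1 - F b)) ^ (N - 1) * (1 - F x)) = c) :=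
  stmt_15_general K F f hFcont hFmono hFK hderiv hfpos N hN c Wfn hW
end

section
/- Let N ≥ 1 be an integer and c > 0 with c·N·(N+1) < 1, and set b = 1 − √(c·N·(N+1)). Then b is the unique point in (0,1) satisfying ∫_b^1 ((x − b)/(1 − b))^(N−1)·(1 − x) dx = c, and the efficient prize satisfies N·c/(1 − b) = √(N·c/(N+1)). (The planner's optimum and efficient prize for the uniform distribution on [0,1].) -/
/-!
For the uniform distribution the planner's first-order integral is a Beta integral in closed
form, `(1 - b)^2 / (N (N + 1))`, so the condition reads `(1 - b)^2 = c N (N + 1)`; on `b < 1` this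
has the single root `1 - √(c N (N + 1))`, and the prize formula is then algebra.
-/

open intervalIntegral

theorem integral_pow_mul_one_sub (M : ℕ) :
    ∫ v in (0:ℝ)..1, v ^ M * (1 - v) = 1 / ((M + 1) * (M + 2)) := by
  have hsplit : ∀ v : ℝ, v ^ M * (1 - v) = v ^ M - v ^ (M + 1) := fun v => by ring
  simp_rw [hsplit]
  rw [integral_sub (intervalIntegrable_pow M) (intervalIntegrable_pow (M + 1)),
    integral_pow, integral_pow]
  field_simp
  push_cast
  ring

/-- The substitution `x = a + (t - a) v` reduces this to `integral_pow_mul_one_sub`. -/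
theorem integral_div_sub_pow_mul_sub (M : ℕ) (a t : ℝ) :
    ∫ x in a..t, ((x - a) / (t - a)) ^ M * (t - x) = (t - a) ^ 2 / ((M + 1) * (M + 2)) := by
  rcases eq_or_ne (t - a) 0 with hd | hd
  · rw [show t = a by linarith, integral_same]
    ring
  have hsubst := smul_integral_comp_mul_add
    (fun x => ((x - a) / (t - a)) ^ M * (t - x)) (t - a) a (a := 0) (b := 1)
  have hintegrand : ∀ v : ℝ, (((t - a) * v + a - a) / (t - a)) ^ M * (t - ((t - a) * v + a))
      = (t - a) * (v ^ M * (1 - v)) := fun v => by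
    rw [add_sub_cancel_right, mul_div_cancel_left₀ v hd]
    ring
  simp only [hintegrand, mul_zero, zero_add, mul_one, sub_add_cancel] at hsubst
  rw [← hsubst, integral_const_mul, integral_pow_mul_one_sub, smul_eq_mul]
  ring

theorem planner_foc_uniform (N : ℕ) (hN : 1 ≤ N) (b : ℝ) :
    ∫ x in b..1, ((x - b) / (1 - b)) ^ (N - 1) * (1 - x) = (1 - b) ^ 2 / (N * (N + 1)) := by
  rw [integral_div_sub_pow_mul_sub, Nat.cast_sub hN]
  ring_nf

/-- Planner's optimum and efficient prize for the uniform distribution on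
`[0,1]`: `b = 1 − √(c·N·(N+1))` is the unique point of `(0,1)` satisfying the
planner first-order condition `∫_b^1 ((x−b)/(1−b))^(N−1)·(1−x) dx = c`, and
the efficient prize is `N·c/(1−b) = √(N·c/(N+1))`. -/
theorem stmt_18
    (N : ℕ) (hN : 1 ≤ N)
    (c : ℝ) (hc : 0 < c)
    (hsmall : c * N * (N + 1) < 1)
    (b : ℝ) (hb : b = 1 - Real.sqrt (c * N * (N + 1))) :
    b ∈ Set.Ioo (0:ℝ) 1 ∧
    (∫ x in b..1, ((x - b) / (1 - b)) ^ (N - 1) * (1 - x)) = c ∧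
    (∀ b' ∈ Set.Ioo (0:ℝ) 1,
      (∫ x in b'..1, ((x - b') / (1 - b')) ^ (N - 1) * (1 - x)) = c → b' = b) ∧
    (N : ℝ) * c / (1 - b) = Real.sqrt ((N : ℝ) * c / (N + 1)) := by
  have hNpos : (0:ℝ) < N := by exact_mod_cast hN
  set s := Real.sqrt (c * N * (N + 1))
  have harg : 0 < c * N * (N + 1) := by positivity
  have hs2 : s ^ 2 = c * N * (N + 1) := Real.sq_sqrt harg.le
  have hspos : 0 < s := Real.sqrt_pos.mpr harg
  have hslt : s < 1 := by nlinarith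
  have hfoc_iff : ∀ b' : ℝ, (1 - b') ^ 2 / (N * (N + 1)) = c ↔ (1 - b') ^ 2 = s ^ 2 := by
    intro b'
    rw [hs2, div_eq_iff (by positivity)]
    ring_nf
  subst hb
  refine ⟨⟨by linarith, by linarith⟩, ?_, fun b' hb' hfoc => ?_, ?_⟩
  · rw [planner_foc_uniform N hN, hfoc_iff]
    ring
  · rw [planner_foc_uniform N hN, hfoc_iff] at hfoc
    nlinarith [hb'.2]
  · rw [sub_sub_cancel, eq_comm, Real.sqrt_eq_iff_mul_self_eq (by positivity) (by positivity)]
    field_simp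
    linear_combination hs2
end
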